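/- arXiv:2011.05934 — 4 statements merged into one kernel-verified Lean document; each statement's English description precedes it below -/
import Mathlib

section
/- For every β > 0, the function f_β(x) = ((1/2 − x) + √((1/2 − x)² + β²))/2 is convex on ℝ and (1/β)-smooth; more precisely, its second derivative satisfies 0 ≤ f_β''(x) ≤ 1/β for all x ∈ ℝ. -/
/-!
With `u = c - x` and `s = √(u² + β²)`, the smoothed hinge loss is `(u + s) / 2`, so
`f' = -(1 + u / s) / 2` and, since `s² - u² = β²`, `f'' = β² / (2 s³)`. This is positive, and
`s ≥ β` bounds it by `1 / (2 β)`; a bound on `f''` is a Lipschitz bound on `f'`.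
-/

open Real Set

noncomputable def smoothedHinge (c β x : ℝ) : ℝ :=
  ((c - x) + √((c - x) ^ 2 + β ^ 2)) / 2

namespace smoothedHinge

variable {c β : ℝ}

lemma hasDerivAt_sqrt (hβ : β ≠ 0) (x : ℝ) :
    HasDerivAt (fun x => √((c - x) ^ 2 + β ^ 2)) (-(c - x) / √((c - x) ^ 2 + β ^ 2)) x := by
  have hs : √((c - x) ^ 2 + β ^ 2) ≠ 0 := by positivity
  refine ((((hasDerivAt_id' x).const_sub c).fun_pow 2).add_const (β ^ 2)
    |>.sqrt (by positivity)).congr_deriv ?_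
  field_simp
  ring

lemma hasDerivAt (hβ : β ≠ 0) (x : ℝ) :
    HasDerivAt (smoothedHinge c β) (-(1 + (c - x) / √((c - x) ^ 2 + β ^ 2)) / 2) x :=
  ((((hasDerivAt_id' x).const_sub c).add (hasDerivAt_sqrt hβ x)).div_const 2).congr_deriv
    (by ring)

lemma deriv_eq (hβ : β ≠ 0) :
    deriv (smoothedHinge c β) = fun x => -(1 + (c - x) / √((c - x) ^ 2 + β ^ 2)) / 2 :=
  funext fun x => (hasDerivAt hβ x).deriv

lemma hasDerivAt_deriv (hβ : β ≠ 0) (x : ℝ) :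
    HasDerivAt (deriv (smoothedHinge c β)) (β ^ 2 / (2 * √((c - x) ^ 2 + β ^ 2) ^ 3)) x := by
  have hs : √((c - x) ^ 2 + β ^ 2) ≠ 0 := by positivity
  have hs_sq : √((c - x) ^ 2 + β ^ 2) ^ 2 = (c - x) ^ 2 + β ^ 2 := sq_sqrt (by positivity)
  rw [deriv_eq hβ]
  refine ((((hasDerivAt_id' x).const_sub c).div (hasDerivAt_sqrt hβ x) hs).const_add 1
    |>.neg.div_const 2).congr_deriv ?_
  field_simp
  linear_combination hs_sq

lemma deriv2_eq (hβ : β ≠ 0) (x : ℝ) :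
    deriv (deriv (smoothedHinge c β)) x = β ^ 2 / (2 * √((c - x) ^ 2 + β ^ 2) ^ 3) :=
  (hasDerivAt_deriv hβ x).deriv

lemma deriv2_nonneg (hβ : β ≠ 0) (x : ℝ) : 0 ≤ deriv (deriv (smoothedHinge c β)) x := by
  rw [deriv2_eq hβ]
  positivity

lemma deriv2_le (hβ : 0 < β) (x : ℝ) : deriv (deriv (smoothedHinge c β)) x ≤ 1 / β := by
  have hs : β ≤ √((c - x) ^ 2 + β ^ 2) :=
    le_sqrt_of_sq_le (le_add_of_nonneg_left (sq_nonneg _))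
  have hs3 : β ^ 3 ≤ √((c - x) ^ 2 + β ^ 2) ^ 3 := pow_le_pow_left₀ hβ.le hs 3
  rw [deriv2_eq hβ.ne', div_le_div_iff₀ (by positivity) hβ]
  linarith [pow_pos hβ 3]

lemma convexOn (hβ : β ≠ 0) : ConvexOn ℝ univ (smoothedHinge c β) :=
  convexOn_univ_of_deriv2_nonneg (fun x => (hasDerivAt hβ x).differentiableAt)
    (fun x => (hasDerivAt_deriv hβ x).differentiableAt) (deriv2_nonneg hβ)

lemma lipschitzWith_deriv (hβ : 0 < β) :
    LipschitzWith (1 / β).toNNReal (deriv (smoothedHinge c β)) := by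
  refine lipschitzWith_of_nnnorm_deriv_le (fun x => (hasDerivAt_deriv hβ.ne' x).differentiableAt)
    fun x => ?_
  rw [← NNReal.coe_le_coe, coe_nnnorm, coe_toNNReal _ (by positivity), norm_eq_abs,
    abs_of_nonneg (deriv2_nonneg hβ.ne' x)]
  exact deriv2_le hβ x

end smoothedHinge

/-- For every `β > 0`, the smoothed hinge loss
`f_β(x) = ((1/2 − x) + √((1/2 − x)² + β²))/2` is convex on ℝ and `(1/β)`-smooth (its
derivative is `(1/β)`-Lipschitz); more precisely its second derivative satisfies
`0 ≤ f_β''(x) ≤ 1/β` for all `x`. -/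
theorem smoothed_hinge_convex_smooth (β : ℝ) (hβ : 0 < β) :
    ConvexOn ℝ Set.univ
        (fun x : ℝ => ((1 / 2 - x) + Real.sqrt ((1 / 2 - x) ^ 2 + β ^ 2)) / 2) ∧
      LipschitzWith (Real.toNNReal (1 / β))
        (deriv (fun x : ℝ => ((1 / 2 - x) + Real.sqrt ((1 / 2 - x) ^ 2 + β ^ 2)) / 2)) ∧
      ∀ x : ℝ,
        0 ≤ deriv (deriv (fun x : ℝ =>
              ((1 / 2 - x) + Real.sqrt ((1 / 2 - x) ^ 2 + β ^ 2)) / 2)) x ∧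
          deriv (deriv (fun x : ℝ =>
              ((1 / 2 - x) + Real.sqrt ((1 / 2 - x) ^ 2 + β ^ 2)) / 2)) x ≤ 1 / β :=
  ⟨smoothedHinge.convexOn hβ.ne', smoothedHinge.lipschitzWith_deriv hβ,
    fun x => ⟨smoothedHinge.deriv2_nonneg hβ.ne' x, smoothedHinge.deriv2_le hβ x⟩⟩
end

section
/- For every β with 0 < β ≤ 1, the function f_β(x) = ((1/2 − x) + √((1/2 − x)² + β²))/2 satisfies |f_β''(x)| ≤ 3/β² and |f_β'''(x)| ≤ 3/β² for all x ∈ ℝ; in particular the derivative f_β' is (2, 3/β²)-smooth. -/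
/-!
Write `s(u) = √(u² + β²)`. The smoothed hinge loss is `x ↦ h(1/2 - x)` for the smoothed
positive part `h(u) = (u + s(u))/2`, and reflecting the argument only changes the signs of
derivatives. From `s' = u/s` one gets `h'' = β²/(2s³)` and `h''' = -3β²u/(2s⁵)`; since `|β| ≤ s`
and `|u| ≤ s`, these are at most `1/(2|β|)` and `3/(2β²)` in absolute value, both below `3/β²`
when `0 < β ≤ 1`.
-/

open Real

namespace SmoothedHinge

noncomputable def smoothAbs (β u : ℝ) : ℝ := √(u ^ 2 + β ^ 2)

noncomputable def smoothPos (β u : ℝ) : ℝ := (u + smoothAbs β u) / 2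

variable {β : ℝ}

lemma smoothAbs_sq (β u : ℝ) : smoothAbs β u ^ 2 = u ^ 2 + β ^ 2 :=
  sq_sqrt (by positivity)

lemma smoothAbs_pos (hβ : β ≠ 0) (u : ℝ) : 0 < smoothAbs β u :=
  sqrt_pos.mpr (by positivity)

lemma abs_le_smoothAbs (β u : ℝ) : |u| ≤ smoothAbs β u :=
  abs_le_sqrt (le_add_of_nonneg_right (sq_nonneg β))

lemma abs_param_le_smoothAbs (β u : ℝ) : |β| ≤ smoothAbs β u :=
  abs_le_sqrt (le_add_of_nonneg_left (sq_nonneg u))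

lemma contDiff_smoothAbs (hβ : β ≠ 0) {n : WithTop ℕ∞} : ContDiff ℝ n (smoothAbs β) :=
  ((contDiff_id.pow 2).add contDiff_const).sqrt fun u => (by positivity : u ^ 2 + β ^ 2 ≠ 0)

lemma contDiff_smoothPos (hβ : β ≠ 0) {n : WithTop ℕ∞} : ContDiff ℝ n (smoothPos β) :=
  (contDiff_id.add (contDiff_smoothAbs hβ)).div_const 2

lemma hasDerivAt_smoothAbs (hβ : β ≠ 0) (u : ℝ) :
    HasDerivAt (smoothAbs β) (u / smoothAbs β u) u := by
  refine (((hasDerivAt_pow 2 u).add_const (β ^ 2)).sqrt (by positivity)).congr_deriv ?_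
  rw [smoothAbs]
  norm_num
  exact mul_div_mul_left _ _ two_ne_zero

lemma hasDerivAt_smoothPos (hβ : β ≠ 0) (u : ℝ) :
    HasDerivAt (smoothPos β) ((1 + u / smoothAbs β u) / 2) u :=
  ((hasDerivAt_id u).add (hasDerivAt_smoothAbs hβ u)).div_const 2

lemma hasDerivAt_div_smoothAbs (hβ : β ≠ 0) (u : ℝ) :
    HasDerivAt (fun u => u / smoothAbs β u) (β ^ 2 / smoothAbs β u ^ 3) u := by
  have hs := (smoothAbs_pos hβ u).ne'
  refine ((hasDerivAt_id' u).div (hasDerivAt_smoothAbs hβ u) hs).congr_deriv ?_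
  field_simp
  linear_combination smoothAbs_sq β u

lemma hasDerivAt_inv_smoothAbs_pow_three (hβ : β ≠ 0) (u : ℝ) :
    HasDerivAt (fun u => (smoothAbs β u ^ 3)⁻¹) (-(3 * u) / smoothAbs β u ^ 5) u := by
  have hs := (smoothAbs_pos hβ u).ne'
  refine (((hasDerivAt_smoothAbs hβ u).fun_pow 3).inv (pow_ne_zero 3 hs)).congr_deriv ?_
  field_simp
  ring

lemma iteratedDeriv_two_smoothPos (hβ : β ≠ 0) :
    iteratedDeriv 2 (smoothPos β) = fun u => β ^ 2 / (2 * smoothAbs β u ^ 3) := by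
  have h1 : deriv (smoothPos β) = fun u => (1 + u / smoothAbs β u) / 2 :=
    funext fun u => (hasDerivAt_smoothPos hβ u).deriv
  funext u
  rw [iteratedDeriv_succ, iteratedDeriv_one, h1]
  convert (((hasDerivAt_div_smoothAbs hβ u).const_add 1).div_const 2).deriv using 1
  ring

lemma iteratedDeriv_three_smoothPos (hβ : β ≠ 0) :
    iteratedDeriv 3 (smoothPos β) = fun u => -(3 * β ^ 2 * u) / (2 * smoothAbs β u ^ 5) := by
  have h2 : iteratedDeriv 2 (smoothPos β) = fun u => β ^ 2 / 2 * (smoothAbs β u ^ 3)⁻¹ := by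
    rw [iteratedDeriv_two_smoothPos hβ]
    funext u
    ring
  funext u
  rw [iteratedDeriv_succ, h2]
  convert ((hasDerivAt_inv_smoothAbs_pow_three hβ u).const_mul (β ^ 2 / 2)).deriv using 1
  ring

lemma abs_iteratedDeriv_two_smoothPos_le (hβ : β ≠ 0) (u : ℝ) :
    |iteratedDeriv 2 (smoothPos β) u| ≤ 1 / (2 * |β|) := by
  have hs := smoothAbs_pos hβ u
  have hβs := abs_param_le_smoothAbs β u
  have hβ' := abs_pos.mpr hβ
  rw [iteratedDeriv_two_smoothPos hβ, abs_of_nonneg (by positivity),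
    div_le_div_iff₀ (by positivity) (by positivity), ← sq_abs β]
  have := pow_le_pow_left₀ hβ'.le hβs 3
  nlinarith

lemma abs_iteratedDeriv_three_smoothPos_le (hβ : β ≠ 0) (u : ℝ) :
    |iteratedDeriv 3 (smoothPos β) u| ≤ 3 / (2 * β ^ 2) := by
  have hs := smoothAbs_pos hβ u
  have hβs : (β ^ 2) ^ 2 ≤ (smoothAbs β u ^ 2) ^ 2 :=
    pow_le_pow_left₀ (sq_nonneg β) (by rw [smoothAbs_sq]; linarith [sq_nonneg u]) 2
  rw [iteratedDeriv_three_smoothPos hβ, abs_div, abs_neg, abs_mul,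
    abs_of_pos (by positivity : 0 < 3 * β ^ 2),
    abs_of_pos (by positivity : 0 < 2 * smoothAbs β u ^ 5),
    div_le_div_iff₀ (by positivity) (by positivity)]
  nlinarith [mul_le_mul (abs_le_smoothAbs β u) hβs (by positivity) hs.le, pow_pos hs 5]

lemma abs_iteratedDeriv_comp_const_sub (n : ℕ) (f : ℝ → ℝ) (c x : ℝ) :
    |iteratedDeriv n (fun x => f (c - x)) x| = |iteratedDeriv n f (c - x)| := by
  simp [iteratedDeriv_comp_const_sub, abs_mul]

lemma smoothedHinge_eq_smoothPos_comp (β : ℝ) :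
    (fun x : ℝ => ((1 / 2 - x) + √((1 / 2 - x) ^ 2 + β ^ 2)) / 2) =
      fun x => smoothPos β (1 / 2 - x) :=
  rfl

end SmoothedHinge

open SmoothedHinge in
/-- For `0 < β ≤ 1`, the smoothed hinge loss
`f_β(x) = ((1/2 − x) + √((1/2 − x)² + β²))/2` satisfies `|f_β''(x)| ≤ 3/β²` and
`|f_β'''(x)| ≤ 3/β²` for all `x`; in particular `f_β` is three times continuously
differentiable, so `f_β'` is `(2, 3/β²)`-smooth. -/
theorem smoothed_hinge_higher_derivs (β : ℝ) (hβ : 0 < β) (hβ1 : β ≤ 1) :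
    ContDiff ℝ 3
        (fun x : ℝ => ((1 / 2 - x) + Real.sqrt ((1 / 2 - x) ^ 2 + β ^ 2)) / 2) ∧
      (∀ x : ℝ,
        |iteratedDeriv 2
            (fun x : ℝ => ((1 / 2 - x) + Real.sqrt ((1 / 2 - x) ^ 2 + β ^ 2)) / 2) x| ≤
          3 / β ^ 2) ∧
      ∀ x : ℝ,
        |iteratedDeriv 3
            (fun x : ℝ => ((1 / 2 - x) + Real.sqrt ((1 / 2 - x) ^ 2 + β ^ 2)) / 2) x| ≤
          3 / β ^ 2 := by
  rw [smoothedHinge_eq_smoothPos_comp]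
  refine ⟨(contDiff_smoothPos hβ.ne').comp (contDiff_const.sub contDiff_id), fun x => ?_,
    fun x => ?_⟩
  · rw [abs_iteratedDeriv_comp_const_sub]
    calc _ ≤ 1 / (2 * |β|) := abs_iteratedDeriv_two_smoothPos_le hβ.ne' _
      _ ≤ 3 / β ^ 2 := by
        rw [abs_of_pos hβ, div_le_div_iff₀ (by positivity) (by positivity)]
        nlinarith
  · rw [abs_iteratedDeriv_comp_const_sub]
    calc _ ≤ 3 / (2 * β ^ 2) := abs_iteratedDeriv_three_smoothPos_le hβ.ne' _
      _ ≤ 3 / β ^ 2 := by gcongr; linarith [sq_nonneg β]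
end

section
/- Let f : [−1, 1] → [−1, 1] be a 1-Lipschitz convex function, let d₋ denote its right derivative at −1 and d₊ its left derivative at 1. Then there exist a probability measure Q supported on [−1, 1] and a constant c ∈ ℝ such that for every θ ∈ [−1, 1], f(θ) = ((d₊ − d₋)/2) · ∫_{[−1,1]} |θ − s| dQ(s) + ((d₊ + d₋)/2) · θ + c. (The measure Q can be taken to be the distribution of s(u) for u uniform on [d₋, d₊], where s(u) is the largest point s with u in the subdifferential ∂f(s).) -/
/-!
The right derivative of `f`, extended by constants outside `[a, b]`, is a Stieltjes function `G`
equal to `d₋` left of `a` and to `d₊` right of `b`. Its measure `μ` (the second derivative of `f`)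
has mass `d₊ - d₋` and lives on `[a, b]`. By the fundamental theorem of calculus and Tonelli,
`f θ - f a - d₋ (θ - a) = ∫_a^θ (G t - d₋) dt = ∫ (θ - s)⁺ dμ(s)`,
and `(θ - s)⁺ = (|θ - s| + θ - s) / 2`.
Normalising `μ` to a probability measure `Q` gives the representation.
-/

open MeasureTheory Set Filter Topology

theorem StieltjesFunction.lintegral_Iic_ofReal_sub (G : StieltjesFunction ℝ) {l : ℝ}
    (hG : Tendsto G atBot (𝓝 l)) (θ : ℝ) :
    ∫⁻ t in Iic θ, ENNReal.ofReal (G t - l) = ∫⁻ s, ENNReal.ofReal (θ - s) ∂G.measure := by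
  have hS : MeasurableSet {p : ℝ × ℝ | p.2 ≤ p.1} := measurableSet_le measurable_snd measurable_fst
  calc ∫⁻ t in Iic θ, ENNReal.ofReal (G t - l)
      = ((volume.restrict (Iic θ)).prod G.measure) {p | p.2 ≤ p.1} := by
        rw [Measure.prod_apply hS]
        exact lintegral_congr fun t => (G.measure_Iic hG t).symm
    _ = ∫⁻ s, ENNReal.ofReal (θ - s) ∂G.measure := by
        rw [Measure.prod_apply_symm hS]
        refine lintegral_congr fun s => ?_
        rw [Measure.restrict_apply' measurableSet_Iic, ← Real.volume_Icc]
        rfl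

theorem MeasureTheory.exists_isProbabilityMeasure_smul_eq {α : Type*} [MeasurableSpace α]
    [MeasurableSingletonClass α] {μ : Measure α} [IsFiniteMeasure μ] {s : Set α}
    (hs : s.Nonempty) (hμ : μ sᶜ = 0) :
    ∃ Q : Measure α, IsProbabilityMeasure Q ∧ Q sᶜ = 0 ∧ μ = μ univ • Q := by
  rcases eq_zero_or_neZero μ with rfl | hμ0
  · obtain ⟨x, hx⟩ := hs
    exact ⟨Measure.dirac x, inferInstance, by simp [hx], by simp⟩
  · refine ⟨(μ univ)⁻¹ • μ, inferInstance, by simp [hμ], ?_⟩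
    rw [smul_smul, ENNReal.mul_inv_cancel (NeZero.ne _) (measure_ne_top _ _), one_smul]

theorem Continuous.integrable_of_measure_compl_Icc_eq_zero {μ : Measure ℝ} [IsFiniteMeasure μ]
    {a b : ℝ} {g : ℝ → ℝ} (hg : Continuous g) (hμ : μ (Icc a b)ᶜ = 0) : Integrable g μ := by
  rw [← Measure.restrict_eq_self_of_ae_mem (mem_ae_iff.2 hμ)]
  exact hg.integrableOn_Icc

theorem MeasureTheory.integral_max_sub_zero {Q : Measure ℝ} [IsProbabilityMeasure Q]
    (hQ : Integrable (fun s => s) Q) (θ : ℝ) :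
    ∫ s, max (θ - s) 0 ∂Q = ((∫ s, |θ - s| ∂Q) + θ - ∫ s, s ∂Q) / 2 := by
  have hsub : Integrable (fun s => θ - s) Q := (integrable_const θ).sub hQ
  have hmax : ∀ s, max (θ - s) 0 = (|θ - s| + (θ - s)) / 2 := fun s => by
    rcases le_total (θ - s) 0 with h | h
    · rw [max_eq_right h, abs_of_nonpos h]; ring
    · rw [max_eq_left h, abs_of_nonneg h]; ring
  simp_rw [hmax]
  rw [integral_div, integral_add hsub.abs hsub, integral_sub (integrable_const θ) hQ]
  simp [add_sub_assoc]

theorem HasDerivWithinAt.Ioi_of_Icc {f : ℝ → ℝ} {f' a b : ℝ}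
    (h : HasDerivWithinAt f f' (Icc a b) a) (hab : a < b) : HasDerivWithinAt f f' (Ioi a) a :=
  h.mono_of_mem_nhdsWithin (Icc_mem_nhdsGT hab)

theorem HasDerivWithinAt.Iio_of_Icc {f : ℝ → ℝ} {f' a b : ℝ}
    (h : HasDerivWithinAt f f' (Icc a b) b) (hab : a < b) : HasDerivWithinAt f f' (Iio b) b :=
  h.mono_of_mem_nhdsWithin (Icc_mem_nhdsLT hab)

noncomputable def extendRightDeriv (f : ℝ → ℝ) (a b t : ℝ) : ℝ :=
  if t < b then derivWithin f (Ioi (max a t)) (max a t) else derivWithin f (Iio b) b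

namespace ConvexOn

variable {f : ℝ → ℝ} {a b dm dp x : ℝ}

theorem continuousOn_Icc_of_hasDerivWithinAt (hfc : ConvexOn ℝ (Icc a b) f) (hab : a < b)
    (hdm : HasDerivWithinAt f dm (Icc a b) a) (hdp : HasDerivWithinAt f dp (Icc a b) b) :
    ContinuousOn f (Icc a b) :=
  hfc.continuousOn_Icc hab ((continuousWithinAt_Icc_iff_Ici hab).mp hdm.continuousWithinAt)
    ((continuousWithinAt_Icc_iff_Iic hab).mp hdp.continuousWithinAt)

theorem differentiableWithinAt_Ioi_of_mem_Ico (hfc : ConvexOn ℝ (Icc a b) f)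
    (hdm : HasDerivWithinAt f dm (Icc a b) a) (hx : x ∈ Ico a b) :
    DifferentiableWithinAt ℝ f (Ioi x) x := by
  rcases hx.1.eq_or_lt with rfl | hax
  · exact (hdm.Ioi_of_Icc hx.2).differentiableWithinAt
  · exact hfc.differentiableWithinAt_Ioi_of_mem_interior (by simp [hax, hx.2])

theorem monotoneOn_rightDeriv_Ico (hfc : ConvexOn ℝ (Icc a b) f)
    (hdm : HasDerivWithinAt f dm (Icc a b) a) :
    MonotoneOn (fun x => derivWithin f (Ioi x) x) (Ico a b) := by
  intro x hx y hy hxy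
  rcases hxy.eq_or_lt with rfl | hxy
  · rfl
  have hyi : y ∈ interior (Icc a b) := by simp [hx.1.trans_lt hxy, hy.2]
  calc derivWithin f (Ioi x) x ≤ slope f x y :=
        hfc.rightDeriv_le_slope (Ico_subset_Icc_self hx) (Ico_subset_Icc_self hy) hxy
          (differentiableWithinAt_Ioi_of_mem_Ico hfc hdm hx)
    _ ≤ derivWithin f (Iio y) y :=
        hfc.slope_le_leftDeriv_of_mem_interior (Ico_subset_Icc_self hx) hyi hxy
    _ ≤ derivWithin f (Ioi y) y := hfc.leftDeriv_le_rightDeriv_of_mem_interior hyi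

theorem rightDeriv_le_leftDeriv_right (hfc : ConvexOn ℝ (Icc a b) f)
    (hdm : HasDerivWithinAt f dm (Icc a b) a) (hdp : HasDerivWithinAt f dp (Icc a b) b)
    (hx : x ∈ Ico a b) :
    derivWithin f (Ioi x) x ≤ derivWithin f (Iio b) b :=
  calc derivWithin f (Ioi x) x ≤ slope f x b :=
        hfc.rightDeriv_le_slope (Ico_subset_Icc_self hx) (right_mem_Icc.2 (hx.1.trans hx.2.le))
          hx.2 (differentiableWithinAt_Ioi_of_mem_Ico hfc hdm hx)
    _ ≤ derivWithin f (Iio b) b :=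
        hfc.slope_le_leftDeriv (Ico_subset_Icc_self hx) (right_mem_Icc.2 (hx.1.trans hx.2.le))
          hx.2 (hdp.Iio_of_Icc (hx.1.trans_lt hx.2)).differentiableWithinAt

/-- Let `u ↓ x` in `c ≤ f'₊(u) ≤ slope f u y`, then `y ↓ x` in `c ≤ slope f x y`. -/
theorem le_rightDeriv_of_forall_Ioo_le (hfc : ConvexOn ℝ (Icc a b) f)
    (hdm : HasDerivWithinAt f dm (Icc a b) a) (hx : x ∈ Ico a b) {c : ℝ}
    (hc : ∀ u ∈ Ioo x b, c ≤ derivWithin f (Ioi u) u) :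
    c ≤ derivWithin f (Ioi x) x := by
  have hdiff := differentiableWithinAt_Ioi_of_mem_Ico hfc hdm hx
  have hle_slope : ∀ y ∈ Ioo x b, c ≤ slope f x y := by
    intro y hy
    have hslope : Tendsto (fun u => slope f u y) (𝓝[>] x) (𝓝 (slope f x y)) := by
      simp only [slope_def_field]
      exact (tendsto_const_nhds.sub hdiff.continuousWithinAt).div
        (tendsto_const_nhds.sub (tendsto_id.mono_left nhdsWithin_le_nhds)) (sub_ne_zero.2 hy.1.ne')
    refine ge_of_tendsto hslope ?_
    filter_upwards [Ioo_mem_nhdsGT hy.1] with u hu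
    have hu' : u ∈ Ico a b := ⟨hx.1.trans hu.1.le, hu.2.trans hy.2⟩
    exact (hc u ⟨hu.1, hu'.2⟩).trans (hfc.rightDeriv_le_slope (Ico_subset_Icc_self hu')
      ⟨hx.1.trans hy.1.le, hy.2.le⟩ hu.2 (differentiableWithinAt_Ioi_of_mem_Ico hfc hdm hu'))
  refine ge_of_tendsto ((hasDerivWithinAt_iff_tendsto_slope' self_notMem_Ioi).1
    hdiff.hasDerivWithinAt) ?_
  filter_upwards [Ioo_mem_nhdsGT hx.2] with y hy using hle_slope y hy

theorem continuousWithinAt_Ici_rightDeriv (hfc : ConvexOn ℝ (Icc a b) f)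
    (hdm : HasDerivWithinAt f dm (Icc a b) a) (hx : x ∈ Ico a b) :
    ContinuousWithinAt (fun x => derivWithin f (Ioi x) x) (Ici x) x := by
  set φ := fun x => derivWithin f (Ioi x) x
  have hmono : MonotoneOn φ (Ioo x b) :=
    (monotoneOn_rightDeriv_Ico hfc hdm).mono fun u hu => ⟨hx.1.trans hu.1.le, hu.2⟩
  have hφx : ∀ u ∈ Ioo x b, φ x ≤ φ u := fun u hu =>
    monotoneOn_rightDeriv_Ico hfc hdm hx ⟨hx.1.trans hu.1.le, hu.2⟩ hu.1.le
  have hbdd : BddBelow (φ '' Ioo x b) := ⟨φ x, by rintro _ ⟨u, hu, rfl⟩; exact hφx u hu⟩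
  have hinf : sInf (φ '' Ioo x b) = φ x :=
    le_antisymm (le_rightDeriv_of_forall_Ioo_le hfc hdm hx fun u hu => csInf_le hbdd ⟨u, hu, rfl⟩)
      (le_csInf ((nonempty_Ioo.2 hx.2).image φ) (by rintro _ ⟨u, hu, rfl⟩; exact hφx u hu))
  rw [← continuousWithinAt_Ioi_iff_Ici, ContinuousWithinAt, ← hinf]
  exact hmono.tendsto_nhdsWithin_Ioo_right (nonempty_Ioo.2 hx.2) hbdd

theorem monotone_extendRightDeriv (hfc : ConvexOn ℝ (Icc a b) f)
    (hdm : HasDerivWithinAt f dm (Icc a b) a) (hdp : HasDerivWithinAt f dp (Icc a b) b)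
    (hab : a < b) : Monotone (extendRightDeriv f a b) := by
  intro s t hst
  have hmem : ∀ {u}, u < b → max a u ∈ Ico a b := fun hu => ⟨le_max_left _ _, max_lt hab hu⟩
  unfold extendRightDeriv
  split_ifs with hs ht ht
  · exact monotoneOn_rightDeriv_Ico hfc hdm (hmem hs) (hmem ht) (max_le_max_left a hst)
  · exact rightDeriv_le_leftDeriv_right hfc hdm hdp (hmem hs)
  · exact absurd (hst.trans_lt ht) hs
  · rfl

theorem continuousWithinAt_Ici_extendRightDeriv (hfc : ConvexOn ℝ (Icc a b) f)
    (hdm : HasDerivWithinAt f dm (Icc a b) a) (hab : a < b) (t : ℝ) :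
    ContinuousWithinAt (extendRightDeriv f a b) (Ici t) t := by
  rcases lt_or_ge t b with htb | hbt
  · have hφ := continuousWithinAt_Ici_rightDeriv hfc hdm
      (x := max a t) ⟨le_max_left _ _, max_lt hab htb⟩
    refine (hφ.comp (continuous_const.max continuous_id).continuousWithinAt
      fun u hu => max_le_max_left a hu).congr_of_eventuallyEq ?_ (by simp [extendRightDeriv, htb])
    filter_upwards [nhdsWithin_le_nhds (Iio_mem_nhds htb)] with u hu
    simp [extendRightDeriv, mem_Iio.1 hu]
  · refine (continuousWithinAt_const (b := derivWithin f (Iio b) b)).congr_of_eventuallyEq ?_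
      (by simp [extendRightDeriv, not_lt.2 hbt])
    filter_upwards [self_mem_nhdsWithin] with u (hu : t ≤ u)
    simp [extendRightDeriv, hbt.trans hu]

noncomputable def rightDerivStieltjes (hfc : ConvexOn ℝ (Icc a b) f)
    (hdm : HasDerivWithinAt f dm (Icc a b) a) (hdp : HasDerivWithinAt f dp (Icc a b) b)
    (hab : a < b) : StieltjesFunction ℝ where
  toFun := extendRightDeriv f a b
  mono' := monotone_extendRightDeriv hfc hdm hdp hab
  right_continuous' := continuousWithinAt_Ici_extendRightDeriv hfc hdm hab

section rightDerivStieltjes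

variable (hfc : ConvexOn ℝ (Icc a b) f) (hdm : HasDerivWithinAt f dm (Icc a b) a)
  (hdp : HasDerivWithinAt f dp (Icc a b) b) (hab : a < b)

theorem rightDerivStieltjes_apply (t : ℝ) :
    hfc.rightDerivStieltjes hdm hdp hab t = extendRightDeriv f a b t := rfl

theorem rightDerivStieltjes_of_le_left {t : ℝ} (ht : t ≤ a) :
    hfc.rightDerivStieltjes hdm hdp hab t = dm := by
  rw [rightDerivStieltjes_apply, extendRightDeriv, if_pos (ht.trans_lt hab), max_eq_left ht]
  exact (hdm.Ioi_of_Icc hab).derivWithin (uniqueDiffWithinAt_Ioi a)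

theorem rightDerivStieltjes_of_right_le {t : ℝ} (ht : b ≤ t) :
    hfc.rightDerivStieltjes hdm hdp hab t = dp := by
  rw [rightDerivStieltjes_apply, extendRightDeriv, if_neg (not_lt.2 ht)]
  exact (hdp.Iio_of_Icc hab).derivWithin (uniqueDiffWithinAt_Iio b)

theorem tendsto_rightDerivStieltjes_atBot :
    Tendsto (hfc.rightDerivStieltjes hdm hdp hab) atBot (𝓝 dm) :=
  tendsto_const_nhds.congr' <| (eventually_le_atBot a).mono fun _ ht =>
    (rightDerivStieltjes_of_le_left hfc hdm hdp hab ht).symm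

theorem tendsto_rightDerivStieltjes_atTop :
    Tendsto (hfc.rightDerivStieltjes hdm hdp hab) atTop (𝓝 dp) :=
  tendsto_const_nhds.congr' <| (eventually_ge_atTop b).mono fun _ ht =>
    (rightDerivStieltjes_of_right_le hfc hdm hdp hab ht).symm

theorem measure_rightDerivStieltjes_univ :
    (hfc.rightDerivStieltjes hdm hdp hab).measure univ = ENNReal.ofReal (dp - dm) :=
  StieltjesFunction.measure_univ _ (tendsto_rightDerivStieltjes_atBot hfc hdm hdp hab)
    (tendsto_rightDerivStieltjes_atTop hfc hdm hdp hab)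

theorem isFiniteMeasure_rightDerivStieltjes :
    IsFiniteMeasure (hfc.rightDerivStieltjes hdm hdp hab).measure :=
  StieltjesFunction.isFiniteMeasure _ (tendsto_rightDerivStieltjes_atBot hfc hdm hdp hab)
    (tendsto_rightDerivStieltjes_atTop hfc hdm hdp hab)

theorem measure_rightDerivStieltjes_compl_Icc :
    (hfc.rightDerivStieltjes hdm hdp hab).measure (Icc a b)ᶜ = 0 := by
  set G := hfc.rightDerivStieltjes hdm hdp hab
  have hIic : G.measure (Iic a) = 0 := by
    rw [G.measure_Iic (tendsto_rightDerivStieltjes_atBot hfc hdm hdp hab),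
      rightDerivStieltjes_of_le_left hfc hdm hdp hab le_rfl, sub_self, ENNReal.ofReal_zero]
  have hIoi : G.measure (Ioi b) = 0 := by
    rw [G.measure_Ioi (tendsto_rightDerivStieltjes_atTop hfc hdm hdp hab),
      rightDerivStieltjes_of_right_le hfc hdm hdp hab le_rfl, sub_self, ENNReal.ofReal_zero]
  refine measure_mono_null (fun s hs => ?_) (measure_union_null hIic hIoi)
  simp only [mem_compl_iff, mem_Icc, not_and_or, not_le] at hs
  exact hs.imp le_of_lt id

theorem integral_rightDerivStieltjes {θ : ℝ} (hθ : θ ∈ Icc a b) :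
    ∫ t in a..θ, hfc.rightDerivStieltjes hdm hdp hab t = f θ - f a := by
  refine intervalIntegral.integral_eq_sub_of_hasDeriv_right_of_le hθ.1
    ((continuousOn_Icc_of_hasDerivWithinAt hfc hab hdm hdp).mono (Icc_subset_Icc le_rfl hθ.2))
    (fun x hx => ?_) ((hfc.rightDerivStieltjes hdm hdp hab).mono.intervalIntegrable)
  have hx' : x ∈ Ico a b := ⟨hx.1.le, hx.2.trans_le hθ.2⟩
  rw [rightDerivStieltjes_apply, extendRightDeriv, if_pos hx'.2, max_eq_right hx'.1]
  exact (differentiableWithinAt_Ioi_of_mem_Ico hfc hdm hx').hasDerivWithinAt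

theorem sub_sub_mul_eq_integral_max {θ : ℝ} (hθ : θ ∈ Icc a b) :
    f θ - f a - dm * (θ - a) =
      ∫ s, max (θ - s) 0 ∂(hfc.rightDerivStieltjes hdm hdp hab).measure := by
  set G := hfc.rightDerivStieltjes hdm hdp hab
  have hftc : f θ - f a - dm * (θ - a) = ∫ t in a..θ, (G t - dm) := by
    rw [intervalIntegral.integral_sub G.mono.intervalIntegrable intervalIntegrable_const,
      integral_rightDerivStieltjes hfc hdm hdp hab hθ, intervalIntegral.integral_const, smul_eq_mul]
    ring
  have hIic : ∫⁻ t in Iic θ, ENNReal.ofReal (G t - dm) =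
      ∫⁻ t in Ioc a θ, ENNReal.ofReal (G t - dm) := by
    rw [← Iic_union_Ioc_eq_Iic hθ.1, lintegral_union measurableSet_Ioc (Iic_disjoint_Ioc le_rfl),
      setLIntegral_congr_fun measurableSet_Iic (g := 0) fun t ht => by
        simp [G, rightDerivStieltjes_of_le_left hfc hdm hdp hab ht]]
    simp
  rw [hftc, intervalIntegral.integral_of_le hθ.1,
    integral_eq_lintegral_of_nonneg_ae (.of_forall fun t => sub_nonneg.2 ?_)
      (G.mono.measurable.sub measurable_const).aestronglyMeasurable,
    integral_eq_lintegral_of_nonneg_ae (f := fun s => max (θ - s) 0)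
      (.of_forall fun s => le_max_right _ _) (by fun_prop), ← hIic,
    G.lintegral_Iic_ofReal_sub (tendsto_rightDerivStieltjes_atBot hfc hdm hdp hab)]
  · simp
  · exact (rightDerivStieltjes_of_le_left hfc hdm hdp hab (min_le_left a t)).symm.trans_le
      (G.mono (min_le_right a t))

end rightDerivStieltjes

end ConvexOn

theorem lipschitz_convex_abs_representation_general
    (f : ℝ → ℝ) (hconv : ConvexOn ℝ (Set.Icc (-1 : ℝ) 1) f)
    (dm dp : ℝ)
    (hdm : HasDerivWithinAt f dm (Set.Icc (-1 : ℝ) 1) (-1))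
    (hdp : HasDerivWithinAt f dp (Set.Icc (-1 : ℝ) 1) 1) :
    ∃ (Q : Measure ℝ), IsProbabilityMeasure Q ∧ Q (Set.Icc (-1 : ℝ) 1)ᶜ = 0 ∧
      ∃ c : ℝ, ∀ θ ∈ Set.Icc (-1 : ℝ) 1,
        f θ = (dp - dm) / 2 * (∫ s, |θ - s| ∂Q) + (dp + dm) / 2 * θ + c := by
  have hab : (-1 : ℝ) < 1 := by norm_num
  have hdmdp : dm ≤ dp :=
    (hconv.le_slope_of_hasDerivWithinAt (left_mem_Icc.2 hab.le) (right_mem_Icc.2 hab.le) hab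
      hdm).trans (hconv.slope_le_of_hasDerivWithinAt (left_mem_Icc.2 hab.le)
        (right_mem_Icc.2 hab.le) hab hdp)
  have := hconv.isFiniteMeasure_rightDerivStieltjes hdm hdp hab
  obtain ⟨Q, hQ, hQc, hμQ⟩ := exists_isProbabilityMeasure_smul_eq (nonempty_Icc.2 hab.le)
    (hconv.measure_rightDerivStieltjes_compl_Icc hdm hdp hab)
  rw [hconv.measure_rightDerivStieltjes_univ] at hμQ
  refine ⟨Q, hQ, hQc, f (-1) + dm - (dp - dm) / 2 * ∫ s, s ∂Q, fun θ hθ => ?_⟩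
  have hrep := hconv.sub_sub_mul_eq_integral_max hdm hdp hab hθ
  rw [hμQ, integral_smul_measure, smul_eq_mul, ENNReal.toReal_ofReal (sub_nonneg.2 hdmdp),
    integral_max_sub_zero (continuous_id.integrable_of_measure_compl_Icc_eq_zero hQc) θ] at hrep
  linear_combination hrep

/-- Every 1-Lipschitz convex function `f : [−1,1] → [−1,1]` with one-sided derivatives
`d₋ = f'₊(−1)` and `d₊ = f'₋(1)` can be written, for some Borel probability measure `Q`
supported on `[−1,1]` and some constant `c`, as
`f(θ) = ((d₊ − d₋)/2) ∫ |θ − s| dQ(s) + ((d₊ + d₋)/2) θ + c` for all `θ ∈ [−1,1]`. -/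
theorem lipschitz_convex_abs_representation
    (f : ℝ → ℝ) (hconv : ConvexOn ℝ (Set.Icc (-1 : ℝ) 1) f)
    (hlip : LipschitzOnWith 1 f (Set.Icc (-1 : ℝ) 1))
    (hmap : Set.MapsTo f (Set.Icc (-1 : ℝ) 1) (Set.Icc (-1 : ℝ) 1))
    (dm dp : ℝ)
    (hdm : HasDerivWithinAt f dm (Set.Icc (-1 : ℝ) 1) (-1))
    (hdp : HasDerivWithinAt f dp (Set.Icc (-1 : ℝ) 1) 1) :
    ∃ (Q : Measure ℝ), IsProbabilityMeasure Q ∧ Q (Set.Icc (-1 : ℝ) 1)ᶜ = 0 ∧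
      ∃ c : ℝ, ∀ θ ∈ Set.Icc (-1 : ℝ) 1,
        f θ = (dp - dm) / 2 * (∫ s, |θ - s| ∂Q) + (dp + dm) / 2 * θ + c :=
  lipschitz_convex_abs_representation_general f hconv dm dp hdm hdp
end

section
/- For all positive integers h, k and p, and every w = (w₁, …, w_p) ∈ [0, 1]^p, it holds that Σ_{v ∈ {0,…,k}^p} Π_{i=1}^p |b^{(h)}_{v_i,k}(w_i)| ≤ (2^h − 1)^p, where b^{(h)}_{v,k} are the iterated Bernstein basis functions of order h. -/
/-!
`B_k` is a positive linear operator on functions on `[0, 1]` which fixes constants, and it only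
samples its argument at the nodes `v / k ∈ [0, 1]`. Hence every iterate `B_k^n` maps the Bernstein
basis `(b_{v,k})_v` to a family that is again nonnegative on `[0, 1]` and sums to `1` there.
By the triangle inequality, `Σ_v |b^{(h)}_{v,k}(x)| ≤ Σ_{i=1}^h C(h,i) = 2^h - 1`, and the
multivariate sum factors into a product of `p` such one-variable sums.
-/

open Finset Set

/-- The Bernstein basis polynomial `b_{v,k}(x) = C(k,v) xᵛ (1−x)^{k−v}`. -/
noncomputable def bernBasis (k v : ℕ) (x : ℝ) : ℝ :=
  (k.choose v : ℝ) * x ^ v * (1 - x) ^ (k - v)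

/-- The Bernstein operator `B_k(g; x) = Σ_{v=0}^k g(v/k) b_{v,k}(x)`. -/
noncomputable def bernOp (k : ℕ) (g : ℝ → ℝ) : ℝ → ℝ :=
  fun x => ∑ v ∈ Finset.range (k + 1), g ((v : ℝ) / k) * bernBasis k v x

/-- The iterated Bernstein basis function of order `h`:
`b^{(h)}_{v,k}(x) = Σ_{i=1}^h C(h,i) (−1)^{i−1} B_k^{i−1}(b_{v,k}; x)`. -/
noncomputable def iterBernBasis (h k v : ℕ) (x : ℝ) : ℝ :=
  ∑ i ∈ Finset.Icc 1 h,
    (h.choose i : ℝ) * (-1 : ℝ) ^ (i - 1) * ((bernOp k)^[i - 1] (bernBasis k v) x)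

lemma bernBasis_nonneg (k v : ℕ) {x : ℝ} (hx : x ∈ Icc (0 : ℝ) 1) : 0 ≤ bernBasis k v x := by
  have : 0 ≤ 1 - x := by linarith [hx.2]
  have := hx.1
  unfold bernBasis
  positivity

lemma sum_bernBasis (k : ℕ) (x : ℝ) : ∑ v ∈ range (k + 1), bernBasis k v x = 1 := by
  have := add_pow x (1 - x) k
  rw [add_sub_cancel, one_pow] at this
  rw [this]
  refine sum_congr rfl fun v _ => ?_
  unfold bernBasis
  ring

lemma natCast_div_mem_Icc {j k : ℕ} (hj : j ∈ range (k + 1)) : (j : ℝ) / k ∈ Icc (0 : ℝ) 1 :=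
  ⟨by positivity, div_le_one_of_le₀ (by exact_mod_cast Nat.lt_succ_iff.mp (mem_range.mp hj))
    (Nat.cast_nonneg k)⟩

section bernOp

variable (k : ℕ)

lemma bernOp_congr {g g' : ℝ → ℝ} (hg : EqOn g g' (Icc 0 1)) (x : ℝ) :
    bernOp k g x = bernOp k g' x :=
  sum_congr rfl fun j hj => by rw [hg (natCast_div_mem_Icc hj)]

lemma bernOp_const (c x : ℝ) : bernOp k (fun _ => c) x = c := by
  simp only [bernOp, ← mul_sum, sum_bernBasis, mul_one]

lemma sum_bernOp {ι : Type*} (s : Finset ι) (g : ι → ℝ → ℝ) (x : ℝ) :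
    ∑ v ∈ s, bernOp k (g v) x = bernOp k (fun y => ∑ v ∈ s, g v y) x := by
  simp only [bernOp, sum_mul]
  exact sum_comm

lemma bernOp_nonneg {g : ℝ → ℝ} (hg : ∀ y ∈ Icc (0 : ℝ) 1, 0 ≤ g y) {x : ℝ}
    (hx : x ∈ Icc (0 : ℝ) 1) : 0 ≤ bernOp k g x :=
  sum_nonneg fun j hj => mul_nonneg (hg _ (natCast_div_mem_Icc hj)) (bernBasis_nonneg k j hx)

lemma iterate_bernOp_nonneg {g : ℝ → ℝ} (hg : ∀ y ∈ Icc (0 : ℝ) 1, 0 ≤ g y) (n : ℕ) :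
    ∀ x ∈ Icc (0 : ℝ) 1, 0 ≤ (bernOp k)^[n] g x := by
  induction n with
  | zero => exact hg
  | succ n ih =>
    intro x hx
    rw [Function.iterate_succ_apply']
    exact bernOp_nonneg k ih hx

lemma sum_iterate_bernOp_bernBasis (n : ℕ) :
    ∀ x ∈ Icc (0 : ℝ) 1, ∑ v ∈ range (k + 1), (bernOp k)^[n] (bernBasis k v) x = 1 := by
  induction n with
  | zero => exact fun x _ => sum_bernBasis k x
  | succ n ih =>
    intro x _
    simp only [Function.iterate_succ_apply']
    rw [sum_bernOp, bernOp_congr k ih, bernOp_const]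

end bernOp

lemma sum_Icc_one_choose (h : ℕ) : ∑ i ∈ Icc 1 h, (h.choose i : ℝ) = 2 ^ h - 1 := by
  have hsum : ∑ i ∈ range (h + 1), (h.choose i : ℝ) = 2 ^ h := by
    exact_mod_cast Nat.sum_range_choose h
  rw [range_eq_Ico, sum_eq_sum_Ico_succ_bot (Nat.succ_pos h), zero_add, Nat.succ_eq_add_one,
    Finset.Ico_add_one_right_eq_Icc, Nat.choose_zero_right, Nat.cast_one] at hsum
  linarith

lemma abs_iterBernBasis_le (h k v : ℕ) {x : ℝ} (hx : x ∈ Icc (0 : ℝ) 1) :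
    |iterBernBasis h k v x| ≤
      ∑ i ∈ Icc 1 h, (h.choose i : ℝ) * (bernOp k)^[i - 1] (bernBasis k v) x := by
  refine (abs_sum_le_sum_abs _ _).trans (sum_le_sum fun i _ => le_of_eq ?_)
  rw [abs_mul, abs_mul, abs_pow, abs_neg, abs_one, one_pow, mul_one, Nat.abs_cast,
    abs_of_nonneg (iterate_bernOp_nonneg k (fun _ => bernBasis_nonneg k v) _ x hx)]

lemma sum_abs_iterBernBasis_le (h k : ℕ) {x : ℝ} (hx : x ∈ Icc (0 : ℝ) 1) :
    ∑ v ∈ range (k + 1), |iterBernBasis h k v x| ≤ 2 ^ h - 1 :=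
  calc ∑ v ∈ range (k + 1), |iterBernBasis h k v x|
      ≤ ∑ v ∈ range (k + 1), ∑ i ∈ Icc 1 h,
          (h.choose i : ℝ) * (bernOp k)^[i - 1] (bernBasis k v) x :=
        sum_le_sum fun v _ => abs_iterBernBasis_le h k v hx
    _ = ∑ i ∈ Icc 1 h, (h.choose i : ℝ) *
          ∑ v ∈ range (k + 1), (bernOp k)^[i - 1] (bernBasis k v) x := by
        rw [sum_comm]
        simp only [mul_sum]
    _ = 2 ^ h - 1 := by
        simp only [sum_iterate_bernOp_bernBasis k _ x hx, mul_one, sum_Icc_one_choose]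

theorem iterBernBasis_abs_sum_le_general (h k p : ℕ)
    (w : Fin p → ℝ) (hw : ∀ i, w i ∈ Set.Icc (0 : ℝ) 1) :
    ∑ v ∈ Fintype.piFinset (fun _ : Fin p => Finset.range (k + 1)),
        ∏ i, |iterBernBasis h k (v i) (w i)| ≤ ((2 : ℝ) ^ h - 1) ^ p := by
  rw [← prod_univ_sum (fun _ => range (k + 1)) (fun i v => |iterBernBasis h k v (w i)|)]
  calc ∏ i, ∑ v ∈ range (k + 1), |iterBernBasis h k v (w i)|
      ≤ ∏ _i : Fin p, ((2 : ℝ) ^ h - 1) :=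
        prod_le_prod (fun _ _ => sum_nonneg fun _ _ => abs_nonneg _)
          fun i _ => sum_abs_iterBernBasis_le h k (hw i)
    _ = ((2 : ℝ) ^ h - 1) ^ p := by simp

/-- For all positive integers `h, k, p` and every `w ∈ [0,1]^p`,
`Σ_{v ∈ {0,…,k}^p} Π_i |b^{(h)}_{v_i,k}(w_i)| ≤ (2^h − 1)^p`. -/
theorem iterBernBasis_abs_sum_le (h k p : ℕ) (hh : 0 < h) (hk : 0 < k) (hp : 0 < p)
    (w : Fin p → ℝ) (hw : ∀ i, w i ∈ Set.Icc (0 : ℝ) 1) :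
    ∑ v ∈ Fintype.piFinset (fun _ : Fin p => Finset.range (k + 1)),
        ∏ i, |iterBernBasis h k (v i) (w i)| ≤ ((2 : ℝ) ^ h - 1) ^ p :=
  iterBernBasis_abs_sum_le_general h k p w hw
end
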